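/- Let ζ be a non-bounding 1-cycle of K. Then every minimal solution set for ζ is a nontrivial 1-cocycle: it is a cocycle and it is not the coboundary δ(S) of any set S of vertices. -/

import Mathlib

namespace ArxivCut

noncomputable section

attribute [local instance] Classical.propDecidable

open Finset

variable {V : Type*} [Fintype V] [DecidableEq V]

/-- A finite abstract simplicial complex on the vertex type `V`. -/
structure SComplex (V : Type*) [DecidableEq V] where
  faces : Finset (Finset V)
  nonempty_mem : ∀ s ∈ faces, s.Nonempty
  down_closed : ∀ s ∈ faces, ∀ t ⊆ s, t.Nonempty → t ∈ faces

/-- The boundary of a `𝔽₂`-chain (a chain is identified with its set of simplices):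
a simplex `τ` lies in the boundary iff it is a facet of an odd number of members. -/
def bdry (c : Finset (Finset V)) : Finset (Finset V) :=
  Finset.univ.filter fun τ => Odd ((c.filter fun σ => τ ⊆ σ ∧ τ.card + 1 = σ.card)).card

/-- `c` is an `r`-chain of `K` (a set of `r`-simplices of `K`). -/
def IsRChain (K : SComplex V) (r : ℕ) (c : Finset (Finset V)) : Prop :=
  ∀ σ ∈ c, σ ∈ K.faces ∧ σ.card = r + 1

/-- `c` is an `r`-cycle of `K`. -/
def IsRCycle (K : SComplex V) (r : ℕ) (c : Finset (Finset V)) : Prop :=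
  IsRChain K r c ∧ bdry c = ∅

/-- `z` is a bounding `r`-cycle of `K`: it is the boundary of an `(r+1)`-chain of `K`. -/
def IsBounding (K : SComplex V) (r : ℕ) (z : Finset (Finset V)) : Prop :=
  ∃ b, IsRChain K (r + 1) b ∧ bdry b = z

/-- Two `r`-chains are homologous in `K` if their `𝔽₂`-sum (symmetric difference) bounds. -/
def Homologous (K : SComplex V) (r : ℕ) (a b : Finset (Finset V)) : Prop :=
  IsBounding K r (symmDiff a b)


/-- `e` is an edge (1-simplex) of `K`. -/
def IsEdge (K : SComplex V) (e : Finset V) : Prop := e ∈ K.faces ∧ e.card = 2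

/-- `t` is a triangle (2-simplex) of `K`. -/
def IsTri (K : SComplex V) (t : Finset V) : Prop := t ∈ K.faces ∧ t.card = 3

/-- The 1-skeleton of `K`, as a simple graph on the vertex type. -/
def skeleton (K : SComplex V) : SimpleGraph V where
  Adj u w := u ≠ w ∧ ({u, w} : Finset V) ∈ K.faces
  symm := by
    constructor
    intro u w h
    refine ⟨h.1.symm, ?_⟩
    rw [Finset.pair_comm]
    exact h.2
  loopless := by constructor; intro v h; exact h.1 rfl

/-- `K` is a triangulation of a closed surface: a finite connected 2-dimensional
simplicial complex in which every edge is contained in exactly two triangles and the link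
of every vertex is a single cycle (equivalently, the triangles around each vertex are
connected through edges containing that vertex). -/
structure IsClosedSurface (K : SComplex V) : Prop where
  vert_mem : ∀ v : V, ({v} : Finset V) ∈ K.faces
  dim_le : ∀ s ∈ K.faces, s.card ≤ 3
  pure2 : ∀ s ∈ K.faces, ∃ t, IsTri K t ∧ s ⊆ t
  edge_in_two_tri : ∀ e, IsEdge K e →
    (Finset.univ.filter fun t => IsTri K t ∧ e ⊆ t).card = 2
  conn : (skeleton K).Connected
  link_single_cycle : ∀ v : V, ∀ t₁ t₂, IsTri K t₁ → IsTri K t₂ → v ∈ t₁ → v ∈ t₂ →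
    Relation.ReflTransGen
      (fun a b => IsTri K a ∧ IsTri K b ∧ v ∈ a ∧ v ∈ b ∧ (a ∩ b).card = 2) t₁ t₂

/-- `c` is a 1-cycle of `K`: a set of edges of `K` meeting every vertex in an even number
of edges. -/
def IsOneCycle (K : SComplex V) (c : Finset (Finset V)) : Prop :=
  (∀ e ∈ c, IsEdge K e) ∧ ∀ v : V, Even ((c.filter fun e => v ∈ e).card)

/-- `z` is a sum of boundaries of triangles of `K`. -/
def IsBounding1 (K : SComplex V) (z : Finset (Finset V)) : Prop :=
  ∃ T : Finset (Finset V), (∀ t ∈ T, IsTri K t) ∧ bdry T = z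

/-- Two 1-chains are homologous: their sum (symmetric difference) is a sum of triangle
boundaries. -/
def Homol1 (K : SComplex V) (a b : Finset (Finset V)) : Prop :=
  IsBounding1 K (symmDiff a b)

/-- `η` is a 1-cocycle of `K`: a set of edges of `K` such that every triangle of `K`
contains an even number of edges of `η`. -/
def IsCocycle (K : SComplex V) (η : Finset (Finset V)) : Prop :=
  (∀ e ∈ η, IsEdge K e) ∧ ∀ t, IsTri K t → Even ((η.filter fun e => e ⊆ t).card)

/-- The dual edges corresponding to the edge set `F` : two distinct triangles of `K` are
related if they share an edge belonging to `F`. -/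
def DualStep (K : SComplex V) (F : Finset (Finset V)) (t₁ t₂ : Finset V) : Prop :=
  t₁ ≠ t₂ ∧ IsTri K t₁ ∧ IsTri K t₂ ∧ ∃ e ∈ F, e ⊆ t₁ ∧ e ⊆ t₂

/-- A triangle incident to the edge set `F` (a node of the subgraph of the dual graph
induced by the dual edges corresponding to `F`). -/
def Incident (K : SComplex V) (F : Finset (Finset V)) (t : Finset V) : Prop :=
  IsTri K t ∧ ∃ e ∈ F, e ⊆ t

/-- The subgraph of the dual graph `D_K` induced by the dual edges corresponding to the
edge set `F` is connected. -/
def DualConnected (K : SComplex V) (F : Finset (Finset V)) : Prop :=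
  ∀ t₁ t₂, Incident K F t₁ → Incident K F t₂ →
    Relation.ReflTransGen (DualStep K F) t₁ t₂

/-- `S` is a feasible set for the 1-cycle `ζ`: it intersects every cycle homologous
to `ζ`. -/
def Feasible (K : SComplex V) (ζ S : Finset (Finset V)) : Prop :=
  ∀ γ, IsOneCycle K γ → Homol1 K γ ζ → (γ ∩ S).Nonempty

/-- The coboundary `δ(A)` of a set `A` of vertices: the set of edges of `K` with exactly
one endpoint in `A`. -/
def cobdryV (K : SComplex V) (A : Finset V) : Finset (Finset V) :=
  Finset.univ.filter fun e => IsEdge K e ∧ (e ∩ A).card = 1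

/-- Two cocycles are cohomologous: their sum (symmetric difference) is a coboundary. -/
def Cohomologous (K : SComplex V) (η η' : Finset (Finset V)) : Prop :=
  ∃ A : Finset V, symmDiff η η' = cobdryV K A

/-!
Minimality of `S` means that for every `e ∈ S` some cycle homologous to `ζ` meets `S` in `e`
alone. If a triangle `t` contained an odd number of edges of `S`, the sum of these cycles over
those edges would be a cycle homologous to `ζ` meeting `S` exactly in the edges of `t`, and
adding `∂t` would give a cycle homologous to `ζ` disjoint from `S`; so `S` is a cocycle.
Double counting the degrees at the vertices of `A` shows that every cycle meets `δ(A)` in an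
even number of edges, which rules out `S = δ(A)`.
-/

open scoped symmDiff

section SymmDiff

variable {α : Type*} [DecidableEq α]

lemma even_card_symmDiff_iff (s t : Finset α) : Even #(s ∆ t) ↔ (Even #s ↔ Even #t) := by
  rw [Finset.symmDiff_def, card_union_of_disjoint disjoint_sdiff_sdiff,
    ← card_sdiff_add_card_inter s t, ← card_sdiff_add_card_inter t s, inter_comm t s]
  simp only [Nat.even_add]
  tauto

lemma filter_symmDiff (p : α → Prop) [DecidablePred p] (s t : Finset α) :
    (s ∆ t).filter p = s.filter p ∆ t.filter p := by
  ext
  simp only [mem_filter, mem_symmDiff]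
  tauto

lemma symmDiff_inter_distrib (s t u : Finset α) : (s ∆ t) ∩ u = (s ∩ u) ∆ (t ∩ u) := by
  ext
  simp only [mem_inter, mem_symmDiff]
  tauto

lemma even_card_filter_mem_powersetCard_two {t : Finset α} (ht : #t = 3) (v : α) :
    Even #((t.powersetCard 2).filter (v ∈ ·)) := by
  by_cases hv : v ∈ t
  · have hsplit := card_filter_add_card_filter_not (s := t.powersetCard 2) (v ∈ ·)
    have hmiss : (t.powersetCard 2).filter (v ∉ ·) = (t.erase v).powersetCard 2 := by
      ext e
      simp only [mem_filter, mem_powersetCard, subset_erase]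
      tauto
    rw [hmiss, card_powersetCard, card_powersetCard, card_erase_of_mem hv, ht] at hsplit
    have hchoose : (3 - 1).choose 2 = 1 ∧ (3).choose 2 = 3 := by decide
    rw [show #((t.powersetCard 2).filter (v ∈ ·)) = 2 by omega]
    exact even_two
  · rw [filter_false_of_mem fun e he hve => hv ((mem_powersetCard.mp he).1 hve)]
    exact Even.zero

end SymmDiff

variable {K : SComplex V}

lemma bdry_symmDiff (a b : Finset (Finset V)) : bdry (a ∆ b) = bdry a ∆ bdry b := by
  ext τ
  simp only [bdry, mem_filter, mem_univ, true_and, mem_symmDiff, filter_symmDiff,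
    ← Nat.not_even_iff_odd, even_card_symmDiff_iff]
  tauto

omit [Fintype V] in
lemma isOneCycle_empty (K : SComplex V) : IsOneCycle K ∅ :=
  ⟨by simp, by simp⟩

omit [Fintype V] in
lemma IsOneCycle.symmDiff {a b : Finset (Finset V)} (ha : IsOneCycle K a)
    (hb : IsOneCycle K b) : IsOneCycle K (a ∆ b) := by
  refine ⟨fun e he => ?_, fun v => ?_⟩
  · rcases mem_symmDiff.mp he with ⟨h, -⟩ | ⟨h, -⟩
    exacts [ha.1 e h, hb.1 e h]
  · rw [filter_symmDiff, even_card_symmDiff_iff]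
    exact iff_of_true (ha.2 v) (hb.2 v)

lemma isBounding1_empty (K : SComplex V) : IsBounding1 K ∅ :=
  ⟨∅, by simp, by ext; simp [bdry]⟩

lemma IsBounding1.symmDiff {a b : Finset (Finset V)} (ha : IsBounding1 K a)
    (hb : IsBounding1 K b) : IsBounding1 K (a ∆ b) := by
  obtain ⟨Ta, hTa, rfl⟩ := ha
  obtain ⟨Tb, hTb, rfl⟩ := hb
  refine ⟨Ta ∆ Tb, fun t ht => ?_, bdry_symmDiff Ta Tb⟩
  rcases mem_symmDiff.mp ht with ⟨h, -⟩ | ⟨h, -⟩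
  exacts [hTa t h, hTb t h]

lemma Homol1.refl (K : SComplex V) (a : Finset (Finset V)) : Homol1 K a a := by
  simpa [Homol1] using isBounding1_empty K

lemma Homol1.symmDiff {a b c d : Finset (Finset V)} (hab : Homol1 K a b) (hcd : Homol1 K c d) :
    Homol1 K (a ∆ c) (b ∆ d) := by
  unfold Homol1
  rw [symmDiff_symmDiff_symmDiff_comm]
  exact IsBounding1.symmDiff hab hcd

lemma bdry_singleton_eq_powersetCard {t : Finset V} (ht : #t = 3) :
    bdry {t} = t.powersetCard 2 := by
  ext τ
  simp only [bdry, mem_filter, mem_univ, true_and, filter_singleton, mem_powersetCard, ht]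
  split_ifs with h
  · simp only [card_singleton, odd_one, true_iff]
    exact ⟨h.1, by omega⟩
  · simp only [card_empty, Nat.not_odd_zero, false_iff, not_and]
    exact fun hsub hcard => h ⟨hsub, by omega⟩

lemma IsTri.isOneCycle_bdry {t : Finset V} (ht : IsTri K t) : IsOneCycle K (bdry {t}) := by
  rw [bdry_singleton_eq_powersetCard ht.2]
  refine ⟨fun e he => ?_, even_card_filter_mem_powersetCard_two ht.2⟩
  obtain ⟨hsub, hcard⟩ := mem_powersetCard.mp he
  exact ⟨K.down_closed t ht.1 e hsub (card_pos.mp (by omega)), hcard⟩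

lemma IsTri.homol1_bdry_empty {t : Finset V} (ht : IsTri K t) : Homol1 K (bdry {t}) ∅ := by
  rw [Homol1, ← bot_eq_empty, symmDiff_bot]
  exact ⟨{t}, by simpa using ht, rfl⟩

lemma IsOneCycle.even_card_inter_cobdryV {γ : Finset (Finset V)} (hγ : IsOneCycle K γ)
    (A : Finset V) : Even #(γ ∩ cobdryV K A) := by
  have hfilter : γ ∩ cobdryV K A = γ.filter fun e => #(e ∩ A) = 1 := by
    ext e
    simp only [cobdryV, mem_inter, mem_filter, mem_univ, true_and]
    exact ⟨fun h => ⟨h.1, h.2.2⟩, fun h => ⟨h.1, hγ.1 e h.1, h.2⟩⟩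
  have hdouble : ∑ v ∈ A, #(γ.filter (v ∈ ·)) = ∑ e ∈ γ, #(e ∩ A) := by
    simp_rw [inter_comm _ A, ← filter_mem_eq_inter, card_eq_sum_ones, sum_filter]
    exact sum_comm
  have hsum : Even (∑ e ∈ γ, #(e ∩ A)) := hdouble ▸ even_sum _ fun v _ => hγ.2 v
  have hone : ∑ e ∈ γ.filter (fun e => #(e ∩ A) = 1), #(e ∩ A)
      = #(γ.filter fun e => #(e ∩ A) = 1) := by
    rw [card_eq_sum_ones]
    exact sum_congr rfl fun e he => (mem_filter.mp he).2
  -- every other edge meets `A` in `0` or `2` vertices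
  have hrest : Even (∑ e ∈ γ.filter (fun e => ¬ #(e ∩ A) = 1), #(e ∩ A)) := by
    refine even_sum _ fun e he => ?_
    obtain ⟨heγ, hne⟩ := mem_filter.mp he
    have : #(e ∩ A) ≤ 2 := (card_le_card inter_subset_left).trans (hγ.1 e heγ).2.le
    rw [Nat.even_iff]
    omega
  rw [← sum_filter_add_sum_filter_not γ (fun e => #(e ∩ A) = 1), Nat.even_add, hone] at hsum
  rw [hfilter]
  exact hsum.mpr hrest

section MinimalFeasible

variable {ζ S : Finset (Finset V)}

lemma exists_cycle_inter_eq_singleton_of_minimal (hfeas : Feasible K ζ S)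
    (hmin : ∀ S', S' ⊂ S → ¬ Feasible K ζ S') {e : Finset V} (he : e ∈ S) :
    ∃ γ, IsOneCycle K γ ∧ Homol1 K γ ζ ∧ γ ∩ S = {e} := by
  have hnot := hmin (S.erase e) (erase_ssubset he)
  simp only [Feasible, not_forall, not_nonempty_iff_eq_empty] at hnot
  obtain ⟨γ, hγ, hγζ, hmiss⟩ := hnot
  rw [inter_erase, erase_eq_empty_iff] at hmiss
  exact ⟨γ, hγ, hγζ, hmiss.resolve_left (hfeas γ hγ hγζ).ne_empty⟩

lemma exists_cycle_inter_eq (E : Finset (Finset V))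
    (hE : ∀ e ∈ E, ∃ γ, IsOneCycle K γ ∧ Homol1 K γ ζ ∧ γ ∩ S = {e}) :
    ∃ G, IsOneCycle K G ∧ Homol1 K G (if Even #E then ∅ else ζ) ∧ G ∩ S = E := by
  induction E using Finset.induction_on with
  | empty => exact ⟨∅, isOneCycle_empty K, by simpa using Homol1.refl K ∅, empty_inter S⟩
  | insert a E ha ih =>
    obtain ⟨γ, hγ, hγζ, hγS⟩ := hE a (mem_insert_self a E)
    obtain ⟨G, hG, hGζ, hGS⟩ := ih fun e he => hE e (mem_insert_of_mem he)
    refine ⟨γ ∆ G, hγ.symmDiff hG, ?_, ?_⟩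
    · convert hγζ.symmDiff hGζ using 1
      rw [card_insert_of_notMem ha]
      by_cases hpar : Even #E <;> simp [hpar, Nat.even_add_one, ← bot_eq_empty]
    · rw [symmDiff_inter_distrib, hγS, hGS,
        symmDiff_eq_union (disjoint_singleton_left.mpr ha), insert_eq]

theorem isCocycle_of_minimal (hSe : ∀ e ∈ S, IsEdge K e) (hfeas : Feasible K ζ S)
    (hmin : ∀ S', S' ⊂ S → ¬ Feasible K ζ S') : IsCocycle K S := by
  refine ⟨hSe, fun t ht => ?_⟩
  by_contra hodd
  obtain ⟨G, hG, hGζ, hGS⟩ := exists_cycle_inter_eq (S.filter (· ⊆ t)) fun e he =>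
    exists_cycle_inter_eq_singleton_of_minimal hfeas hmin (mem_filter.mp he).1
  rw [if_neg hodd] at hGζ
  have hBS : bdry {t} ∩ S = S.filter (· ⊆ t) := by
    ext e
    simp only [bdry_singleton_eq_powersetCard ht.2, mem_inter, mem_powersetCard, mem_filter]
    exact ⟨fun h => ⟨h.2, h.1.1⟩, fun h => ⟨⟨h.2, (hSe e h.1).2⟩, h.1⟩⟩
  have hmeet := hfeas (G ∆ bdry {t}) (hG.symmDiff ht.isOneCycle_bdry)
    (by simpa [← bot_eq_empty] using hGζ.symmDiff ht.homol1_bdry_empty)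
  rw [symmDiff_inter_distrib, hGS, hBS, symmDiff_self] at hmeet
  exact not_nonempty_empty hmeet

theorem not_exists_eq_cobdryV_of_minimal (hζ : IsOneCycle K ζ) (hfeas : Feasible K ζ S)
    (hmin : ∀ S', S' ⊂ S → ¬ Feasible K ζ S') : ¬ ∃ A : Finset V, S = cobdryV K A := by
  rintro ⟨A, rfl⟩
  obtain ⟨e, he⟩ := hfeas ζ hζ (Homol1.refl K ζ)
  obtain ⟨γ, hγ, -, hγS⟩ :=
    exists_cycle_inter_eq_singleton_of_minimal hfeas hmin (mem_inter.mp he).2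
  have hpar := hγ.even_card_inter_cobdryV A
  rw [hγS, card_singleton] at hpar
  exact Nat.not_even_one hpar

end MinimalFeasible

theorem statement7_general (K : SComplex V)
    (ζ : Finset (Finset V)) (hζ : IsOneCycle K ζ)
    (S : Finset (Finset V)) (hSe : ∀ e ∈ S, IsEdge K e)
    (hfeas : Feasible K ζ S) (hmin : ∀ S', S' ⊂ S → ¬ Feasible K ζ S') :
    IsCocycle K S ∧ ¬ ∃ A : Finset V, S = cobdryV K A :=
  ⟨isCocycle_of_minimal hSe hfeas hmin, not_exists_eq_cobdryV_of_minimal hζ hfeas hmin⟩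

/-- Let `ζ` be a non-bounding 1-cycle of `K`.  Every minimal solution
set for `ζ` is a nontrivial 1-cocycle: it is a cocycle and it is not the coboundary
`δ(A)` of any set `A` of vertices. -/
theorem statement7 (K : SComplex V) (hK : IsClosedSurface K)
    (ζ : Finset (Finset V)) (hζ : IsOneCycle K ζ) (hnb : ¬ IsBounding1 K ζ)
    (S : Finset (Finset V)) (hSe : ∀ e ∈ S, IsEdge K e)
    (hfeas : Feasible K ζ S) (hmin : ∀ S', S' ⊂ S → ¬ Feasible K ζ S') :
    IsCocycle K S ∧ ¬ ∃ A : Finset V, S = cobdryV K A :=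
  statement7_general K ζ hζ S hSe hfeas hmin

end

end ArxivCut
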